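/- Let α ∈ (0,2), β ∈ (−1,1), let σ : ℝ → (0,∞) be a continuously differentiable, strictly increasing bijection from ℝ onto (0,∞), and let h : ℝ → ℝ be continuous with ∫_ℝ |h(x)| σ′(x) dx < ∞. Then the function z ↦ z|z|^α h(σ^{−1}(|z|)) is ν_{α,β}-integrable and ∫_{ℝ∖{0}} z|z|^α h(σ^{−1}(|z|)) ν_{α,β}(dz) = β C_α ∫_ℝ h(x) σ′(x) dx. -/

import Mathlib

open MeasureTheory Real Set Filter Topology

/-- The constant `C_α`: `α(1-α)/(Γ(2-α)cos(πα/2))` for `α ≠ 1`, and `2/π` for `α = 1`. -/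
noncomputable def Calpha (α : ℝ) : ℝ :=
  if α = 1 then 2 / π else α * (1 - α) / (Real.Gamma (2 - α) * Real.cos (π * α / 2))

/-- `C_p(β) = C_α (1+β)/2`. -/
noncomputable def Cp (α β : ℝ) : ℝ := Calpha α * (1 + β) / 2

/-- `C_n(β) = C_α (1-β)/2`. -/
noncomputable def Cn (α β : ℝ) : ℝ := Calpha α * (1 - β) / 2

/-- The asymmetric Lévy measure
`ν_{α,β}(dy) = (C_p(β)1_{(0,∞)}(y) + C_n(β)1_{(-∞,0)}(y)) |y|^{-1-α} dy` on `ℝ ∖ {0}`. -/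
noncomputable def nuAsym (α β : ℝ) : Measure ℝ :=
  (volume.restrict {(0:ℝ)}ᶜ).withDensity fun y =>
    ENNReal.ofReal ((if 0 < y then Cp α β else Cn α β) * |y| ^ (-(1 + α)))

/-!
Against `ν_{α,β}` the factor `z |z|^α` cancels the density `|z|^{-1-α}` up to the sign of `z`,
so with `φ = h ∘ σ⁻¹` the integral is `C_p ∫_{z>0} φ(z) dz - C_n ∫_{z<0} φ(-z) dz
= (C_p - C_n) ∫_0^∞ φ`, and `C_p - C_n = β C_α`. The substitution `z = σ(x)`, legitimate because
`σ` is a differentiable increasing bijection onto `(0,∞)`, turns `∫_0^∞ φ` into `∫ h σ'`.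
-/

section WithDensityOfReal

variable {X E : Type*} [MeasurableSpace X] [NormedAddCommGroup E] [NormedSpace ℝ E]
  {μ : Measure X} {d : X → ℝ}

lemma integrable_withDensity_ofReal_iff (hd : Measurable d) (hd0 : ∀ᵐ x ∂μ, 0 ≤ d x)
    {g : X → E} :
    Integrable g (μ.withDensity fun x => ENNReal.ofReal (d x)) ↔
      Integrable (fun x => d x • g x) μ := by
  rw [integrable_withDensity_iff_integrable_smul' hd.ennreal_ofReal
    (.of_forall fun _ => ENNReal.ofReal_lt_top)]
  refine integrable_congr ?_
  filter_upwards [hd0] with x hx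
  rw [ENNReal.toReal_ofReal hx]

lemma integral_withDensity_ofReal (hd : Measurable d) (hd0 : ∀ᵐ x ∂μ, 0 ≤ d x) (g : X → E) :
    ∫ x, g x ∂μ.withDensity (fun x => ENNReal.ofReal (d x)) = ∫ x, d x • g x ∂μ := by
  rw [integral_withDensity_eq_integral_toReal_smul hd.ennreal_ofReal
    (.of_forall fun _ => ENNReal.ofReal_lt_top)]
  refine integral_congr_ae ?_
  filter_upwards [hd0] with x hx
  rw [ENNReal.toReal_ofReal hx]

end WithDensityOfReal

section RealLine

variable {E : Type*} [NormedAddCommGroup E]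

lemma integrableOn_Iic_comp_neg {f : ℝ → E} (hf : IntegrableOn f (Ioi 0)) :
    IntegrableOn (fun y => f (-y)) (Iic 0) := by
  have hneg : MeasurableEmbedding fun x : ℝ => -x := (Homeomorph.neg ℝ).measurableEmbedding
  rw [← Measure.map_neg_eq_self (volume : Measure ℝ), hneg.integrableOn_map_iff]
  simpa [Function.comp_def, neg_preimage] using (integrableOn_Ici_iff_integrableOn_Ioi).2 hf

variable [NormedSpace ℝ E]

lemma StrictMono.integrableOn_range_comp_invFun_iff {σ : ℝ → ℝ} (hm : StrictMono σ)
    (hd : Differentiable ℝ σ) (g : ℝ → E) :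
    IntegrableOn (fun z => g (Function.invFun σ z)) (range σ) ↔
      Integrable fun x => deriv σ x • g x := by
  have hinv : ∀ x, Function.invFun σ (σ x) = x := Function.leftInverse_invFun hm.injective
  simpa only [image_univ, hinv, integrableOn_univ] using
    integrableOn_image_iff_integrableOn_deriv_smul_of_monotoneOn MeasurableSet.univ
      (fun x _ => (hd x).hasDerivAt.hasDerivWithinAt) (hm.monotone.monotoneOn _)
      (fun z => g (Function.invFun σ z))

lemma StrictMono.setIntegral_range_comp_invFun {σ : ℝ → ℝ} (hm : StrictMono σ)
    (hd : Differentiable ℝ σ) (g : ℝ → E) :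
    ∫ z in range σ, g (Function.invFun σ z) = ∫ x, deriv σ x • g x := by
  have hinv : ∀ x, Function.invFun σ (σ x) = x := Function.leftInverse_invFun hm.injective
  simpa only [image_univ, hinv, Measure.restrict_univ] using
    integral_image_eq_integral_deriv_smul_of_monotoneOn MeasurableSet.univ
      (fun x _ => (hd x).hasDerivAt.hasDerivWithinAt) (hm.monotone.monotoneOn _)
      (fun z => g (Function.invFun σ z))

lemma integrable_ite_smul_comp_abs (a b : ℝ) {f : ℝ → E} (hf : IntegrableOn f (Ioi 0)) :
    Integrable fun y => (if 0 < y then a else b) • f |y| := by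
  have hpos : IntegrableOn (fun y => (if 0 < y then a else b) • f |y|) (Ioi 0) :=
    IntegrableOn.congr_fun (hf.smul a)
      (fun y hy => by simp [mem_Ioi.1 hy, abs_of_pos (mem_Ioi.1 hy)]) measurableSet_Ioi
  have hneg : IntegrableOn (fun y => (if 0 < y then a else b) • f |y|) (Iic 0) :=
    IntegrableOn.congr_fun ((integrableOn_Iic_comp_neg hf).smul b)
      (fun y hy => by simp [not_lt.2 (mem_Iic.1 hy), abs_of_nonpos (mem_Iic.1 hy)])
      measurableSet_Iic
  simpa [Iic_union_Ioi] using hneg.union hpos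

lemma integral_ite_smul_comp_abs (a b : ℝ) {f : ℝ → E} (hf : IntegrableOn f (Ioi 0)) :
    ∫ y, (if 0 < y then a else b) • f |y| = (a + b) • ∫ y in Ioi 0, f y := by
  have hpos : ∫ y in Ioi 0, (if 0 < y then a else b) • f |y| = a • ∫ y in Ioi 0, f y := by
    rw [← integral_smul]
    exact setIntegral_congr_fun measurableSet_Ioi
      (fun y hy => by simp [mem_Ioi.1 hy, abs_of_pos (mem_Ioi.1 hy)])
  have hneg : ∫ y in Iic 0, (if 0 < y then a else b) • f |y| = b • ∫ y in Ioi 0, f y := by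
    calc ∫ y in Iic 0, (if 0 < y then a else b) • f |y| = ∫ y in Iic 0, b • f (-y) :=
          setIntegral_congr_fun measurableSet_Iic
            (fun y hy => by simp [not_lt.2 (mem_Iic.1 hy), abs_of_nonpos (mem_Iic.1 hy)])
      _ = b • ∫ y in Ioi 0, f y := by rw [integral_smul, integral_comp_neg_Iic, neg_zero]
  rw [← integral_add_compl measurableSet_Iic (integrable_ite_smul_comp_abs a b hf), compl_Iic,
    hpos, hneg, add_smul, add_comm]

end RealLine

lemma Calpha_pos {α : ℝ} (hα : α ∈ Ioo (0 : ℝ) 2) : 0 < Calpha α := by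
  obtain ⟨h0, h2⟩ := hα
  have hΓ : 0 < Gamma (2 - α) := Gamma_pos_of_pos (by linarith)
  unfold Calpha
  split_ifs with h1
  · positivity
  rcases lt_or_gt_of_ne h1 with hlt | hgt
  · have hcos : 0 < cos (π * α / 2) :=
      cos_pos_of_mem_Ioo ⟨by nlinarith [pi_pos], by nlinarith [pi_pos]⟩
    exact div_pos (by nlinarith) (by positivity)
  · have hcos : cos (π * α / 2) < 0 :=
      cos_neg_of_pi_div_two_lt_of_lt (by nlinarith [pi_pos]) (by nlinarith [pi_pos])
    exact div_pos_of_neg_of_neg (by nlinarith) (mul_neg_of_pos_of_neg hΓ hcos)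

noncomputable def nuAsymDensity (α β y : ℝ) : ℝ :=
  (if 0 < y then Cp α β else Cn α β) * |y| ^ (-(1 + α))

lemma nuAsym_eq_withDensity (α β : ℝ) :
    nuAsym α β = volume.withDensity fun y => ENNReal.ofReal (nuAsymDensity α β y) := by
  rw [nuAsym, restrict_compl_singleton]
  rfl

lemma measurable_nuAsymDensity (α β : ℝ) : Measurable (nuAsymDensity α β) :=
  (measurable_const.ite measurableSet_Ioi measurable_const).mul
    (continuous_abs.measurable.pow_const _)

lemma nuAsymDensity_nonneg {α β : ℝ} (hα : α ∈ Ioo (0 : ℝ) 2) (hβ : β ∈ Ioo (-1 : ℝ) 1)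
    (y : ℝ) : 0 ≤ nuAsymDensity α β y := by
  have hC := Calpha_pos hα
  have hCp : 0 ≤ Cp α β := by unfold Cp; nlinarith [hβ.1]
  have hCn : 0 ≤ Cn α β := by unfold Cn; nlinarith [hβ.2]
  unfold nuAsymDensity
  split_ifs <;> positivity

lemma nuAsymDensity_mul_self_mul_abs_rpow (α β : ℝ) {y : ℝ} (hy : y ≠ 0) :
    nuAsymDensity α β y * (y * |y| ^ α) = if 0 < y then Cp α β else -Cn α β := by
  have hpow : |y| ^ (-(1 + α)) * |y| ^ α = |y|⁻¹ := by
    rw [← rpow_add (abs_pos.2 hy), show -(1 + α) + α = -1 by ring, rpow_neg_one]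
  have hsign : |y|⁻¹ * y = if 0 < y then 1 else -1 := by
    split_ifs with hpos
    · rw [abs_of_pos hpos, inv_mul_cancel₀ hy]
    · rw [abs_of_neg (lt_of_le_of_ne (not_lt.1 hpos) hy), inv_neg, neg_mul, inv_mul_cancel₀ hy]
  calc nuAsymDensity α β y * (y * |y| ^ α)
      = (if 0 < y then Cp α β else Cn α β) * (|y|⁻¹ * y) := by
        rw [nuAsymDensity, ← hpow]; ring
    _ = if 0 < y then Cp α β else -Cn α β := by rw [hsign]; split_ifs <;> ring

/-- for `σ : ℝ → (0,∞)` a `C¹` strictly increasing bijection onto `(0,∞)`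
and `h` continuous with `∫ |h| σ' < ∞`, the function `z ↦ z|z|^α h(σ⁻¹(|z|))` is
`ν_{α,β}`-integrable and its integral equals `β C_α ∫ h(x) σ'(x) dx`. -/
theorem stmt_8 (α β : ℝ) (hα : α ∈ Set.Ioo (0:ℝ) 2) (hβ : β ∈ Set.Ioo (-1:ℝ) 1)
    (σ : ℝ → ℝ) (hσC : ContDiff ℝ 1 σ) (hσm : StrictMono σ)
    (hσr : Set.range σ = Set.Ioi 0)
    (h : ℝ → ℝ) (hh : Continuous h)
    (hint : Integrable (fun x => |h x| * deriv σ x)) :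
    Integrable (fun z => z * |z| ^ α * h (Function.invFun σ |z|)) (nuAsym α β) ∧
    ∫ z, z * |z| ^ α * h (Function.invFun σ |z|) ∂(nuAsym α β)
      = β * Calpha α * ∫ x, h x * deriv σ x := by
  have hσd : Differentiable ℝ σ := hσC.differentiable one_ne_zero
  have hσ'h : Integrable fun x => deriv σ x • h x := by
    refine (integrable_norm_iff ((measurable_deriv σ).smul hh.measurable).aestronglyMeasurable).1
      (hint.congr (.of_forall fun x => ?_))
    change |h x| * deriv σ x = ‖deriv σ x • h x‖
    rw [norm_smul, Real.norm_of_nonneg hσm.monotone.deriv_nonneg, Real.norm_eq_abs, mul_comm]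
  have hφ : IntegrableOn (fun z => h (Function.invFun σ z)) (Ioi 0) := by
    rwa [← hσr, hσm.integrableOn_range_comp_invFun_iff hσd]
  have hφ_eq : ∫ z in Ioi 0, h (Function.invFun σ z) = ∫ x, h x * deriv σ x := by
    simp only [← hσr, hσm.setIntegral_range_comp_invFun hσd, smul_eq_mul, mul_comm]
  have hd0 : ∀ᵐ y ∂volume, 0 ≤ nuAsymDensity α β y := .of_forall (nuAsymDensity_nonneg hα hβ)
  have hae : (fun z => nuAsymDensity α β z • (z * |z| ^ α * h (Function.invFun σ |z|)))
      =ᵐ[volume] fun z => (if 0 < z then Cp α β else -Cn α β) • h (Function.invFun σ |z|) := by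
    filter_upwards [compl_mem_ae_iff.2 (measure_singleton (0 : ℝ))] with z hz
    rw [smul_eq_mul, smul_eq_mul, ← nuAsymDensity_mul_self_mul_abs_rpow α β hz]
    ring
  rw [nuAsym_eq_withDensity, integrable_withDensity_ofReal_iff (measurable_nuAsymDensity α β) hd0,
    integral_withDensity_ofReal (measurable_nuAsymDensity α β) hd0, integrable_congr hae,
    integral_congr_ae hae, integral_ite_smul_comp_abs _ _ hφ, hφ_eq, smul_eq_mul, Cp, Cn]
  exact ⟨integrable_ite_smul_comp_abs _ _ hφ, by ring⟩
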